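/- An up-down word w = w₁w₂⋯w_ℓ avoids the vincular pattern 2-31 if and only if it avoids the classical pattern 231 (i.e., no indices j₁ < j₂ < j₃ with w_{j₃} < w_{j₁} < w_{j₂}). -/
import Mathlib


/-- `w` is an up-down word: `w₀ < w₁ > w₂ < w₃ > ⋯` (0-indexed). -/
def IsUpDown {l k : ℕ} (w : Fin l → Fin k) : Prop :=
  ∀ j : ℕ, ∀ h : j + 1 < l,
    (j % 2 = 0 → w ⟨j, by omega⟩ < w ⟨j + 1, h⟩) ∧
    (j % 2 = 1 → w ⟨j + 1, h⟩ < w ⟨j, by omega⟩)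

/-- `w` avoids the vincular pattern 2-31. -/
def AvoidsV2_31 {l k : ℕ} (w : Fin l → Fin k) : Prop :=
  ∀ a j : ℕ, ∀ haj : a < j, ∀ h : j + 1 < l,
    ¬ (w ⟨j + 1, h⟩ < w ⟨a, by omega⟩ ∧ w ⟨a, by omega⟩ < w ⟨j, by omega⟩)

/-- `w` avoids the classical pattern 231. -/
def Avoids231 {l k : ℕ} (w : Fin l → Fin k) : Prop :=
  ¬ ∃ j₁ j₂ j₃ : Fin l, j₁ < j₂ ∧ j₂ < j₃ ∧ w j₃ < w j₁ ∧ w j₁ < w j₂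

/-- An up-down word avoids the vincular pattern 2-31 iff it avoids the
classical pattern 231. -/
theorem stmt_13 (l k : ℕ) (w : Fin l → Fin k) (hud : IsUpDown w) :
    AvoidsV2_31 w ↔ Avoids231 w := by
  constructor
  · intro hA
    rintro ⟨j₁, j₂, j₃, h12, h23, h31, h12v⟩
    classical
    set P : ℕ → Prop := fun t =>
      ∃ ht : t < l, j₂.val < t ∧ t ≤ j₃.val ∧ w ⟨t, ht⟩ < w j₁ with hP
    have hPj3 : P j₃.val := ⟨j₃.isLt, h23, le_refl _, by simpa using h31⟩
    have hex : ∃ t, P t := ⟨j₃.val, hPj3⟩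
    set t := Nat.find hex with ht_def
    obtain ⟨htl, ht2, ht3, htlt⟩ := Nat.find_spec hex
    have hmin : ∀ s < t, ¬ P s := fun s hs => Nat.find_min hex hs
    have ht1 : 1 ≤ t := by omega
    set j := t - 1 with hj_def
    have hjt : j + 1 = t := by omega
    have hjl : j + 1 < l := by
      have := j₃.isLt; omega
    -- show w j₁ < w ⟨j, _⟩
    have hkey : w j₁ < w ⟨j, by omega⟩ := by
      rcases lt_or_eq_of_le (by omega : j₂.val ≤ j) with hj2 | hj2
      · -- j > j₂
        rcases lt_trichotomy (w j₁) (w ⟨j, by omega⟩) with h | h | h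
        · exact h
        · exfalso
          -- w j = w j₁, descent at j, look at j-1
          have hdesc : w ⟨j + 1, hjl⟩ < w ⟨j, by omega⟩ := by
            rw [← h]
            have : (⟨j + 1, hjl⟩ : Fin l) = ⟨t, htl⟩ := by simp [hjt]
            rw [this]; exact htlt
          have hparity : j % 2 = 1 := by
            rcases Nat.mod_two_eq_zero_or_one j with hp | hp
            · exact absurd ((hud j hjl).1 hp) (not_lt_of_gt hdesc)
            · exact hp
          have hj1 : 1 ≤ j := by omega
          have hjm : (j - 1) % 2 = 0 := by omega
          have hjm1l : (j - 1) + 1 < l := by omega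
          have hasc : w ⟨j - 1, by omega⟩ < w ⟨(j - 1) + 1, hjm1l⟩ :=
            (hud (j - 1) hjm1l).1 hjm
          have heq : (⟨(j - 1) + 1, hjm1l⟩ : Fin l) = ⟨j, by omega⟩ := by
            simp; omega
          rw [heq, ← h] at hasc
          rcases lt_or_eq_of_le (by omega : j₂.val ≤ j - 1) with hc | hc
          · exact hmin (j - 1) (by omega) ⟨by omega, hc, by omega, hasc⟩
          · have : w j₂ < w j₁ := by
              have : (⟨j - 1, by omega⟩ : Fin l) = j₂ := by
                simp [← hc]
              rwa [this] at hasc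
            exact absurd h12v (not_lt_of_gt this)
        · exfalso
          exact hmin j (by omega) ⟨by omega, hj2, by omega, h⟩
      · have : (⟨j, by omega⟩ : Fin l) = j₂ := by simp [← hj2]
        rw [this]; exact h12v
    have haj : j₁.val < j := by
      have : j₁.val < j₂.val := h12
      omega
    apply hA j₁.val j haj hjl
    constructor
    · have : (⟨j + 1, hjl⟩ : Fin l) = ⟨t, htl⟩ := by simp [hjt]
      rw [this]
      simpa using htlt
    · simpa using hkey
  · intro hA a j haj h hcon
    exact hA ⟨⟨a, by omega⟩, ⟨j, by omega⟩, ⟨j + 1, h⟩, by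
      simpa [Fin.lt_def] using haj, by simp [Fin.lt_def], hcon.1, hcon.2⟩
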